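/- Let L be a COM on U and X, Y ∈ L covectors. Then the Hamming distance between the tope sets of the faces F(X) and F(Y) equals |Sep(X,Y)|: for all topes T ≥ X and T' ≥ Y one has d(T,T') ≥ |Sep(X,Y)|, and this bound is attained. -/
import Mathlib


variable {U : Type*} [Fintype U] [DecidableEq U]

/-- Composition of sign vectors. -/
def sComp (X Y : U → SignType) : U → SignType :=
  fun e => if X e = 0 then Y e else X e

/-- The sign-vector partial order. -/
def sLe (X Y : U → SignType) : Prop := ∀ e, X e = 0 ∨ X e = Y e

/-- A tope of a simple COM: a covector with full support. -/
def IsTope (L : Set (U → SignType)) (T : U → SignType) : Prop :=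
  T ∈ L ∧ ∀ e, T e ≠ 0

lemma sLe_trans {X Y Z : U → SignType} (h1 : sLe X Y) (h2 : sLe Y Z) : sLe X Z := by
  intro e
  rcases h1 e with h | h
  · exact Or.inl h
  · rcases h2 e with h' | h'
    · exact Or.inl (h ▸ h')
    · exact Or.inr (h.trans h')

lemma sLe_comp {X Y : U → SignType} : sLe X (sComp X Y) := by
  intro e; by_cases h : X e = 0
  · exact Or.inl h
  · right; simp [sComp, h]

lemma comp_mem {L : Set (U → SignType)}
    (hFS : ∀ X ∈ L, ∀ Y ∈ L, sComp X (-Y) ∈ L)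
    {X Y : U → SignType} (hX : X ∈ L) (hY : Y ∈ L) : sComp X Y ∈ L := by
  have h2 := hFS X hX _ (hFS X hX Y hY)
  have heq : sComp X (-(sComp X (-Y))) = sComp X Y := by
    funext e; by_cases h : X e = 0 <;> simp [sComp, h]
  rwa [heq] at h2

lemma tope_exists {L : Set (U → SignType)}
    (hFS : ∀ X ∈ L, ∀ Y ∈ L, sComp X (-Y) ∈ L)
    (hsimple : ∀ e : U, ∃ W ∈ L, W e ≠ 0)
    {Z : U → SignType} (hZ : Z ∈ L) :
    ∃ T, IsTope L T ∧ sLe Z T := by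
  have key : ∀ s : Finset U, ∃ T ∈ L, sLe Z T ∧ ∀ e ∈ s, T e ≠ 0 := by
    intro s
    induction s using Finset.induction_on with
    | empty => exact ⟨Z, hZ, fun e => Or.inr rfl, by simp⟩
    | @insert a s ha ih =>
      obtain ⟨T, hTL, hTZ, hTs⟩ := ih
      by_cases h : T a = 0
      · obtain ⟨W, hWL, hWa⟩ := hsimple a
        refine ⟨sComp T W, comp_mem hFS hTL hWL, sLe_trans hTZ sLe_comp, ?_⟩
        intro e he
        rcases Finset.mem_insert.1 he with rfl | he
        · simpa [sComp, h] using hWa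
        · simp [sComp, hTs e he]
      · exact ⟨T, hTL, hTZ, fun e he => by
          rcases Finset.mem_insert.1 he with rfl | he
          · exact h
          · exact hTs e he⟩
  obtain ⟨T, hTL, hTZ, hT⟩ := key Finset.univ
  exact ⟨T, ⟨hTL, fun e => hT e (Finset.mem_univ e)⟩, hTZ⟩

lemma sep_lemma1 : ∀ a b : SignType, a * b = -1 → a ≠ 0 ∧ b ≠ 0 ∧ a ≠ b := by decide

lemma sep_lemma2 : ∀ a b : SignType, a * b ≠ -1 → b ≠ 0 → a = 0 ∨ a = b := by decide

lemma hamming_eq_ncard (T T' : U → SignType) :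
    hammingDist T T' = ({e : U | T e ≠ T' e}).ncard := by
  rw [Set.ncard_eq_toFinset_card']
  simp [hammingDist, Set.toFinset_setOf]

/-- in a COM `L`, the distance between the tope sets of the faces `F(X)` and
`F(Y)` equals `|Sep(X,Y)|`: every pair of topes `T ≥ X`, `T' ≥ Y` satisfies
`d(T,T') ≥ |Sep(X,Y)|`, and this bound is attained. -/
theorem dist_faces_eq_sep
    (L : Set (U → SignType))
    (hSE : ∀ X ∈ L, ∀ Y ∈ L, ∀ e, X e * Y e = -1 →
      ∃ Z ∈ L, Z e = 0 ∧ ∀ f, X f * Y f ≠ -1 → Z f = sComp X Y f)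
    (hFS : ∀ X ∈ L, ∀ Y ∈ L, sComp X (-Y) ∈ L)
    (hsimple : ∀ e : U, ∃ W ∈ L, W e ≠ 0)
    (X : U → SignType) (hX : X ∈ L) (Y : U → SignType) (hY : Y ∈ L) :
    (∀ T T', IsTope L T → sLe X T → IsTope L T' → sLe Y T' →
      ({e : U | X e * Y e = -1}).ncard ≤ hammingDist T T') ∧
    (∃ T T', IsTope L T ∧ sLe X T ∧ IsTope L T' ∧ sLe Y T' ∧
      hammingDist T T' = ({e : U | X e * Y e = -1}).ncard) := by
  constructor
  · intro T T' hT hXT hT' hYT'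
    rw [hamming_eq_ncard]
    apply Set.ncard_le_ncard _ (Set.toFinite _)
    intro e he
    obtain ⟨hx0, hy0, hxy⟩ := sep_lemma1 _ _ he
    have hTe : T e = X e := ((hXT e).resolve_left hx0).symm
    have hT'e : T' e = Y e := ((hYT' e).resolve_left hy0).symm
    simp only [Set.mem_setOf_eq]
    rw [hTe, hT'e]; exact hxy
  · obtain ⟨T, hT, hTge⟩ := tope_exists hFS hsimple (comp_mem hFS hX hY)
    refine ⟨T, sComp Y T, hT, sLe_trans sLe_comp hTge, ⟨comp_mem hFS hY hT.1, ?_⟩,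
      sLe_comp, ?_⟩
    · intro e
      by_cases h : Y e = 0
      · simpa [sComp, h] using hT.2 e
      · simpa [sComp, h] using h
    · rw [hamming_eq_ncard]
      congr 1
      ext e
      simp only [Set.mem_setOf_eq]
      constructor
      · intro hne
        by_contra hsep
        apply hne
        by_cases h : Y e = 0
        · simp [sComp, h]
        · have hTY : T e = Y e := by
            have hXYe : sComp X Y e = Y e := by
              rcases sep_lemma2 _ _ hsep h with h0 | heq
              · simp [sComp, h0]
              · simp [sComp, heq, h]
            rcases hTge e with h0 | heq
            · rw [hXYe] at h0; exact absurd h0 h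
            · rw [← heq, hXYe]
          simp [sComp, h, hTY]
      · intro he
        obtain ⟨hx0, hy0, hxy⟩ := sep_lemma1 _ _ he
        have hTe : T e = X e := by
          rcases hTge e with h0 | heq
          · simp [sComp, hx0] at h0
          · rw [← heq]; simp [sComp, hx0]
        have : sComp Y T e = Y e := by simp [sComp, hy0]
        rw [hTe, this]; exact hxy
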